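/- Assume 1 ≤ minsupp ≤ |𝒯|. The approximate representation RMinMMaxF := MMCRMin ∪ MFCRMax characterizes membership in MCR: for every pattern X ⊆ ℐ, X ∈ MCR if and only if there exist J ∈ MMCRMin with J ⊆ X and Z ∈ MFCRMax with X ⊆ Z. -/

import Mathlib

open Finset

variable {τ ι : Type*} [DecidableEq ι]

/-- Conjunctive support: number of transactions containing the whole pattern. -/
def suppConj (T : Finset τ) (items : τ → Finset ι) (X : Finset ι) : ℕ :=
  (T.filter fun t => X ⊆ items t).card

/-- Disjunctive support: number of transactions containing at least one item of the pattern. -/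
def suppDisj (T : Finset τ) (items : τ → Finset ι) (X : Finset ι) : ℕ :=
  (T.filter fun t => (X ∩ items t).Nonempty).card

/-- The bond measure (division by zero in `ℚ` yields `0`, matching the convention). -/
def bond (T : Finset τ) (items : τ → Finset ι) (X : Finset ι) : ℚ :=
  (suppConj T items X : ℚ) / (suppDisj T items X : ℚ)

/-- Correlated patterns. -/
def MC (T : Finset τ) (items : τ → Finset ι) (I : Finset ι) (minbond : ℚ) :
    Set (Finset ι) :=
  {X | X ⊆ I ∧ minbond ≤ bond T items X}

/-- Rare patterns. -/
def MR (T : Finset τ) (items : τ → Finset ι) (I : Finset ι) (minsupp : ℕ) :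
    Set (Finset ι) :=
  {X | X ⊆ I ∧ suppConj T items X < minsupp}

/-- Correlated rare patterns. -/
def MCR (T : Finset τ) (items : τ → Finset ι) (I : Finset ι) (minsupp : ℕ) (minbond : ℚ) :
    Set (Finset ι) :=
  {X | X ⊆ I ∧ minbond ≤ bond T items X ∧ suppConj T items X < minsupp}

/-- Closed correlated rare patterns. -/
def MFCR (T : Finset τ) (items : τ → Finset ι) (I : Finset ι) (minsupp : ℕ) (minbond : ℚ) :
    Set (Finset ι) :=
  {X | X ∈ MCR T items I minsupp minbond ∧
    ∀ Y : Finset ι, X ⊂ Y → Y ⊆ I → bond T items Y ≠ bond T items X}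

/-- Minimal correlated rare patterns. -/
def MMCR (T : Finset τ) (items : τ → Finset ι) (I : Finset ι) (minsupp : ℕ) (minbond : ℚ) :
    Set (Finset ι) :=
  {X | X ∈ MCR T items I minsupp minbond ∧
    ∀ Y : Finset ι, Y ⊂ X → bond T items Y ≠ bond T items X}

/-- Maximal correlated patterns. -/
def MCMax (T : Finset τ) (items : τ → Finset ι) (I : Finset ι) (minbond : ℚ) :
    Set (Finset ι) :=
  {X | X ∈ MC T items I minbond ∧
    ∀ Y : Finset ι, X ⊂ Y → Y ⊆ I → Y ∉ MC T items I minbond}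

/-- Minimal rare patterns. -/
def MRMin (T : Finset τ) (items : τ → Finset ι) (I : Finset ι) (minsupp : ℕ) :
    Set (Finset ι) :=
  {X | X ∈ MR T items I minsupp ∧ ∀ Y : Finset ι, Y ⊂ X → Y ∉ MR T items I minsupp}

/-- Maximal closed correlated rare patterns. -/
def MFCRMax (T : Finset τ) (items : τ → Finset ι) (I : Finset ι) (minsupp : ℕ) (minbond : ℚ) :
    Set (Finset ι) :=
  MFCR T items I minsupp minbond ∩ MCMax T items I minbond

/-- The minimal elements of `MMCR`. -/
def MMCRMin (T : Finset τ) (items : τ → Finset ι) (I : Finset ι) (minsupp : ℕ) (minbond : ℚ) :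
    Set (Finset ι) :=
  MMCR T items I minsupp minbond ∩ MRMin T items I minsupp

/-
The conjunctive support is antitone and the disjunctive support monotone in the pattern, and the
former is bounded by the latter on nonempty patterns; hence the bond is antitone on nonempty
patterns, strictly so across a drop of conjunctive support. Given `X ∈ MCR`, a minimal rare
`J ⊆ X` is nonempty because `Supp(∧∅) = |𝒯| ≥ minsupp`, is correlated by antitonicity, and no
proper subset can share its bond since every proper subset is frequent. A maximal correlated
`Z ⊇ X` is rare, and no proper superset can share its bond without being correlated.
Conversely `J ⊆ X ⊆ Z` makes `X` rare through `J` and correlated through `Z`.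
-/

variable {T : Finset τ} {items : τ → Finset ι} {I X Y : Finset ι} {minsupp : ℕ} {minbond : ℚ}

section Support

lemma suppConj_anti (h : X ⊆ Y) : suppConj T items Y ≤ suppConj T items X :=
  card_le_card <| monotone_filter_right T fun _ _ hY => h.trans hY

lemma suppDisj_mono (h : X ⊆ Y) : suppDisj T items X ≤ suppDisj T items Y :=
  card_le_card <| monotone_filter_right T fun _ _ hX => hX.mono (inter_subset_inter_right h)

lemma suppConj_le_suppDisj (hX : X.Nonempty) : suppConj T items X ≤ suppDisj T items X := by
  obtain ⟨x, hx⟩ := hX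
  exact card_le_card <| monotone_filter_right T fun _ _ ht => ⟨x, mem_inter.2 ⟨hx, ht hx⟩⟩

lemma suppConj_empty : suppConj T items ∅ = T.card := by
  simp [suppConj]

lemma bond_empty : bond T items ∅ = 0 := by
  simp [bond, suppDisj]

lemma nonempty_of_bond_pos (h : 0 < bond T items X) : X.Nonempty := by
  rw [nonempty_iff_ne_empty]
  rintro rfl
  simp [bond_empty] at h

lemma bond_le_bond (hXY : X ⊆ Y) (hX : X.Nonempty) : bond T items Y ≤ bond T items X := by
  have hc : suppConj T items Y ≤ suppConj T items X := suppConj_anti hXY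
  have hd : suppDisj T items X ≤ suppDisj T items Y := suppDisj_mono hXY
  have hcd : suppConj T items X ≤ suppDisj T items X := suppConj_le_suppDisj hX
  unfold bond
  rcases (suppDisj T items X).eq_zero_or_pos with hdX | hdX
  · have hcY : suppConj T items Y = 0 := by omega
    rw [hcY, Nat.cast_zero, zero_div]
    positivity
  · calc (suppConj T items Y : ℚ) / suppDisj T items Y
        ≤ suppConj T items Y / suppDisj T items X := by gcongr
      _ ≤ suppConj T items X / suppDisj T items X := by gcongr

lemma bond_lt_bond (hXY : X ⊆ Y) (hX : X.Nonempty)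
    (hc : suppConj T items Y < suppConj T items X) : bond T items Y < bond T items X := by
  have hd : suppDisj T items X ≤ suppDisj T items Y := suppDisj_mono hXY
  have hdX : 0 < suppDisj T items X :=
    (Nat.zero_le _).trans_lt (hc.trans_le (suppConj_le_suppDisj hX))
  unfold bond
  calc (suppConj T items Y : ℚ) / suppDisj T items Y
      ≤ suppConj T items Y / suppDisj T items X := by gcongr
    _ < suppConj T items X / suppDisj T items X := by gcongr

end Support

section Extremal

lemma nonempty_of_mem_MR (hs : minsupp ≤ T.card) (hX : X ∈ MR T items I minsupp) :
    X.Nonempty := by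
  rw [nonempty_iff_ne_empty]
  rintro rfl
  have hr := hX.2
  rw [suppConj_empty] at hr
  omega

lemma exists_mem_MRMin_subset (hX : X ∈ MR T items I minsupp) :
    ∃ J ∈ MRMin T items I minsupp, J ⊆ X := by
  obtain ⟨J, hJX, hJ⟩ := exists_minimal_le_of_wellFoundedLT (· ∈ MR T items I minsupp) X hX
  exact ⟨J, ⟨hJ.prop, fun Y hYJ hY => hJ.not_lt hY hYJ⟩, hJX⟩

lemma exists_mem_MCMax_superset (hX : X ∈ MC T items I minbond) :
    ∃ Z ∈ MCMax T items I minbond, X ⊆ Z := by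
  have hfin : (MC T items I minbond).Finite :=
    I.powerset.finite_toSet.subset fun Y hY => mem_coe.2 (mem_powerset.2 hY.1)
  obtain ⟨Z, hXZ, hZ⟩ := hfin.exists_le_maximal hX
  exact ⟨Z, ⟨hZ.prop, fun Y hZY _ hY => hZ.not_gt hY hZY⟩, hXZ⟩

lemma mem_MMCRMin_of_mem_MRMin (hb0 : 0 < minbond) (hX : X ∈ MRMin T items I minsupp)
    (hbX : minbond ≤ bond T items X) : X ∈ MMCRMin T items I minsupp minbond := by
  obtain ⟨⟨hXI, hrX⟩, hmin⟩ := hX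
  refine ⟨⟨⟨hXI, hbX, hrX⟩, fun Y hYX heq => ?_⟩, ⟨hXI, hrX⟩, hmin⟩
  have hfreqY : minsupp ≤ suppConj T items Y := by
    by_contra! hrY
    exact hmin Y hYX ⟨hYX.subset.trans hXI, hrY⟩
  have hY : Y.Nonempty := nonempty_of_bond_pos (heq ▸ hb0.trans_le hbX)
  exact (bond_lt_bond hYX.subset hY (hrX.trans_le hfreqY)).ne' heq

lemma mem_MFCRMax_of_mem_MCMax (hX : X ∈ MCMax T items I minbond)
    (hrX : suppConj T items X < minsupp) : X ∈ MFCRMax T items I minsupp minbond := by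
  obtain ⟨⟨hXI, hbX⟩, hmax⟩ := hX
  exact ⟨⟨⟨hXI, hbX, hrX⟩, fun Y hXY hYI heq => hmax Y hXY hYI ⟨hYI, heq ▸ hbX⟩⟩,
    ⟨hXI, hbX⟩, hmax⟩

end Extremal

theorem stmt13_general (T : Finset τ) (items : τ → Finset ι) (I : Finset ι)
    (minsupp : ℕ) (minbond : ℚ)
    (hs2 : minsupp ≤ T.card)
    (hb0 : 0 < minbond)
    (X : Finset ι) (hXI : X ⊆ I) :
    X ∈ MCR T items I minsupp minbond ↔
      (∃ J ∈ MMCRMin T items I minsupp minbond, J ⊆ X) ∧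
        ∃ Z ∈ MFCRMax T items I minsupp minbond, X ⊆ Z := by
  constructor
  · rintro ⟨-, hbX, hrX⟩
    obtain ⟨J, hJ, hJX⟩ := exists_mem_MRMin_subset (⟨hXI, hrX⟩ : X ∈ MR T items I minsupp)
    have hbJ := hbX.trans (bond_le_bond hJX (nonempty_of_mem_MR hs2 hJ.1))
    obtain ⟨Z, hZ, hXZ⟩ := exists_mem_MCMax_superset (⟨hXI, hbX⟩ : X ∈ MC T items I minbond)
    exact ⟨⟨J, mem_MMCRMin_of_mem_MRMin hb0 hJ hbJ, hJX⟩,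
      ⟨Z, mem_MFCRMax_of_mem_MCMax hZ ((suppConj_anti hXZ).trans_lt hrX), hXZ⟩⟩
  · rintro ⟨⟨J, ⟨-, hJ, -⟩, hJX⟩, ⟨Z, ⟨⟨⟨-, hbZ, -⟩, -⟩, -⟩, hXZ⟩⟩
    have hX : X.Nonempty := (nonempty_of_mem_MR hs2 hJ).mono hJX
    exact ⟨hXI, hbZ.trans (bond_le_bond hXZ hX), (suppConj_anti hJX).trans_lt hJ.2⟩

theorem stmt13 (T : Finset τ) (items : τ → Finset ι) (I : Finset ι)
    (hitems : ∀ t ∈ T, items t ⊆ I)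
    (minsupp : ℕ) (minbond : ℚ)
    (hs1 : 1 ≤ minsupp) (hs2 : minsupp ≤ T.card)
    (hb0 : 0 < minbond) (hb1 : minbond ≤ 1)
    (X : Finset ι) (hXI : X ⊆ I) :
    X ∈ MCR T items I minsupp minbond ↔
      (∃ J ∈ MMCRMin T items I minsupp minbond, J ⊆ X) ∧
        ∃ Z ∈ MFCRMax T items I minsupp minbond, X ⊆ Z :=
  stmt13_general T items I minsupp minbond hs2 hb0 X hXI
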